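/- Let a, b > 1 be coprime integers, H(u) = -(ab(u + 2πi) - 2πi)²/(4ab), and v(u) = -ab(u + 2πi). Then for every complex number u, the quantity Im(H(u)) - π·Re(u) - (1/2)·Re(u)·Im(v(u)) equals 0. -/
import Mathlib

open Complex

theorem stmt2 (a b : ℕ) (ha : 1 < a) (hb : 1 < b) (hab : Nat.Coprime a b) (u : ℂ) :
    (-((a : ℂ) * b * (u + 2 * Real.pi * I) - 2 * Real.pi * I) ^ 2 / (4 * a * b)).im
      - Real.pi * u.re
      - (1 / 2) * u.re * (-(a : ℂ) * b * (u + 2 * Real.pi * I)).im = 0 := by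
  have ha' : (a : ℝ) ≠ 0 := by positivity
  have hb' : (b : ℝ) ≠ 0 := by positivity
  simp [div_im, normSq_apply, pow_two]
  field_simp
  ring
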